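/- arXiv:1902.10325 — 3 statements merged into one kernel-verified Lean document; each statement's English description precedes it below -/
import Mathlib

section
/- Let X be a Polish space, (Ξ, 𝒜, ℙ) a complete probability space, T : Ξ → Ξ an ergodic measure-preserving transformation, and M : Ξ ⇉ X a measurable set-valued map with closed values. Set E_n(ξ) := ⋂_{k=1}^n M(T^k(ξ)) and M_as := {x ∈ X : x ∈ M(ξ) for ℙ-a.e. ξ}. Then for ℙ-a.e. ξ ∈ Ξ, the indicator functions δ_{E_n(ξ)} epi-converge to δ_{M_as} (equivalently, the averaged indicators (1/n) Σ_{k=1}^n δ_{M(T^k(ξ))} epi-converge to δ_{M_as}). -/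
open Filter Topology MeasureTheory Set

noncomputable section

/-- Epi-convergence of a sequence of extended-real-valued functions on a metric space:
for every `x`, (a) `liminf f n (u n) ≥ g x` along every sequence `u → x`, and
(b) `limsup f n (u n) ≤ g x` along some sequence `u → x`. -/
def EpiConv {X : Type*} [MetricSpace X] (f : ℕ → X → EReal) (g : X → EReal) : Prop :=
  ∀ x : X,
    (∀ u : ℕ → X, Tendsto u atTop (𝓝 x) → g x ≤ atTop.liminf fun n => f n (u n)) ∧
    (∃ u : ℕ → X, Tendsto u atTop (𝓝 x) ∧ (atTop.limsup fun n => f n (u n)) ≤ g x)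

/-- Continuous convergence: `f n (u n) → g x` for every `x` and every sequence `u → x`. -/
def ContConv {X : Type*} [MetricSpace X] (f : ℕ → X → EReal) (g : X → EReal) : Prop :=
  ∀ x : X, ∀ u : ℕ → X, Tendsto u atTop (𝓝 x) →
    Tendsto (fun n => f n (u n)) atTop (𝓝 (g x))

/-- Infimal value of `h` on `C`. -/
def vOn {X : Type*} (h : X → EReal) (C : Set X) : EReal := ⨅ x ∈ C, h x

open Classical in
/-- ε-infimal value of `h` on `C`: `inf_C h + ε` if `inf_C h > -∞`, and `-1/ε` otherwise
(with the convention `1/0 = +∞`, so `-1/0 = -∞`). -/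
def vEpsOn {X : Type*} (h : X → EReal) (C : Set X) (ε : ℝ) : EReal :=
  if vOn h C = ⊥ then (if ε = 0 then ⊥ else ((-ε⁻¹ : ℝ) : EReal))
  else vOn h C + (ε : EReal)

/-- ε-argmin of `h` on `C`: the points of `C` where `h` is below the ε-infimal value. -/
def argminOn {X : Type*} (h : X → EReal) (C : Set X) (ε : ℝ) : Set X :=
  {x ∈ C | h x ≤ vEpsOn h C ε}

/-- Painlevé–Kuratowski outer limit: points whose distance to `S n` has liminf 0. -/
def outerLim {X : Type*} [MetricSpace X] (S : ℕ → Set X) : Set X :=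
  {x | atTop.liminf (fun n => EMetric.infEdist x (S n)) = 0}

/-- Painlevé–Kuratowski inner limit: points whose distance to `S n` has limsup 0. -/
def innerLim {X : Type*} [MetricSpace X] (S : ℕ → Set X) : Set X :=
  {x | atTop.limsup (fun n => EMetric.infEdist x (S n)) = 0}

open Classical in
/-- Indicator function `δ_A`: `0` on `A`, `+∞` off `A`. -/
def delta {X : Type*} (A : Set X) : X → EReal := fun x => if x ∈ A then 0 else ⊤

/-- The sequence `g n` is eventually level-compact on the sets `C n`: for every level `α`
there is `N` such that the union over `n ≥ N` of the `α`-sublevel sets of `g n` on `C n`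
is relatively compact. -/
def EvLevelCompact {X : Type*} [MetricSpace X] (g : ℕ → X → EReal) (C : ℕ → Set X) : Prop :=
  ∀ α : ℝ, ∃ N : ℕ, IsCompact (closure (⋃ n ∈ Ici N, {x ∈ C n | g n x ≤ (α : EReal)}))

/-- Measurability of a set-valued map: preimages of open sets are measurable. -/
def MeasurableMultifun {Ξ X : Type*} [MeasurableSpace Ξ] [TopologicalSpace X]
    (M : Ξ → Set X) : Prop :=
  ∀ U : Set X, IsOpen U → MeasurableSet {ξ | (M ξ ∩ U).Nonempty}

/-- `P` is the countable product `ℙ^∞` of the probability measure `ℙ`: every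
finite-dimensional cylinder has product measure. -/
def IsProductMeasure {Ξ : Type*} [MeasurableSpace Ξ] (P : Measure (ℕ → Ξ))
    (ℙ : Measure Ξ) : Prop :=
  ∀ (s : Finset ℕ) (A : ℕ → Set Ξ), (∀ i, MeasurableSet (A i)) →
    P {ω | ∀ i ∈ s, ω i ∈ A i} = ∏ i ∈ s, ℙ (A i)

/-- Moreau envelope `e_λ g`. -/
def moreau {d : ℕ} (g : EuclideanSpace ℝ (Fin d) → EReal) (lam : ℝ)
    (x : EuclideanSpace ℝ (Fin d)) : EReal :=
  ⨅ u, g u + ((‖x - u‖ ^ 2 / (2 * lam) : ℝ) : EReal)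

/-!
For a.e. `ξ` two countable families of events are controlled at once. A countable dense subset
`D` of `M_as` lies in every `M (T^[k] ξ)`, since `T^[k]` preserves `ℙ`; so `D ⊆ E n ξ` for all
`n` and every point of `M_as` is a limit of points of the `E n ξ`. For a basic open set `U`
with `M ζ ∩ U ≠ ∅` failing to hold a.s., ergodicity makes the orbit of `ξ` eventually reach a
`ζ` with `M ζ ∩ U = ∅`. A point `x ∉ M_as` has such a neighbourhood `U` (the values of `M` are
closed), so `x` is not a cluster point of the `E n ξ`. These are the two halves of the
Painlevé–Kuratowski convergence `E n ξ → M_as`, which is epi-convergence of the indicators.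
-/

open TopologicalSpace

lemma delta_nonneg {X : Type*} (A : Set X) (x : X) : 0 ≤ delta A x := by
  unfold delta
  split_ifs <;> simp

lemma epiConv_delta_of_kuratowski {X : Type*} [MetricSpace X] {S : ℕ → Set X} {B : Set X}
    (h_outer : ∀ x u, Tendsto u atTop (𝓝 x) → (∃ᶠ n in atTop, u n ∈ S n) → x ∈ B)
    (h_inner : ∀ x ∈ B, ∃ u, Tendsto u atTop (𝓝 x) ∧ ∀ᶠ n in atTop, u n ∈ S n) :
    EpiConv (fun n => delta (S n)) (delta B) := by
  intro x
  by_cases hx : x ∈ B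
  · obtain ⟨u, hu, hu_mem⟩ := h_inner x hx
    refine ⟨fun v _ => ?_, u, hu, ?_⟩
    · simp only [delta, hx, if_true]
      exact le_liminf_of_le (by isBoundedDefault) (Eventually.of_forall fun n => delta_nonneg _ _)
    · simp only [delta, hx, if_true]
      exact limsup_le_of_le (by isBoundedDefault) (hu_mem.mono fun n hn => by simp [hn])
  · refine ⟨fun v hv => ?_, fun _ => x, tendsto_const_nhds, by simp [delta, hx]⟩
    have h_notMem : ∀ᶠ n in atTop, v n ∉ S n := not_frequently.1 fun h => hx (h_outer x v hv h)
    simp only [delta, hx, if_false]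
    exact le_liminf_of_le (by isBoundedDefault) (h_notMem.mono fun n hn => by simp [hn])

lemma mem_of_tendsto_of_frequently_mem_biInter_Icc {X : Type*} [TopologicalSpace X]
    {F : ℕ → Set X} {k : ℕ} (hFk : IsClosed (F k)) (hk : 1 ≤ k) {u : ℕ → X} {x : X}
    (hu : Tendsto u atTop (𝓝 x)) (hfreq : ∃ᶠ n in atTop, u n ∈ ⋂ j ∈ Finset.Icc 1 n, F j) :
    x ∈ F k :=
  hFk.mem_of_frequently_of_tendsto
    ((hfreq.and_eventually (eventually_ge_atTop k)).mono fun _ hn =>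
      mem_iInter₂.1 hn.1 k (Finset.mem_Icc.2 ⟨hk, hn.2⟩)) hu

lemma ae_mem_of_forall_countableBasis {Ξ X : Type*} [MeasurableSpace Ξ] [TopologicalSpace X]
    [SecondCountableTopology X] {μ : Measure Ξ} {M : Ξ → Set X} (hM : ∀ ζ, IsClosed (M ζ))
    {x : X} (h : ∀ U ∈ countableBasis X, x ∈ U → ∀ᵐ ζ ∂μ, (M ζ ∩ U).Nonempty) :
    ∀ᵐ ζ ∂μ, x ∈ M ζ := by
  have h_all : ∀ᵐ ζ ∂μ, ∀ U ∈ countableBasis X, x ∈ U → (M ζ ∩ U).Nonempty :=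
    (ae_ball_iff (countable_countableBasis X)).2 fun U hU =>
      by simpa only [eventually_imp_distrib_left] using h U hU
  filter_upwards [h_all] with ζ hζ
  rw [← (hM ζ).closure_eq, (isBasis_countableBasis X).mem_closure_iff]
  exact fun U hU hxU => (hζ U hU hxU).mono fun _ hy => ⟨hy.2, hy.1⟩

lemma MeasureTheory.MeasurePreserving.ae_forall_iterate {Ξ : Type*} [MeasurableSpace Ξ]
    {μ : Measure Ξ} {T : Ξ → Ξ} (hT : MeasurePreserving T μ μ) {p : Ξ → Prop}
    (h : ∀ᵐ ζ ∂μ, p ζ) : ∀ᵐ ξ ∂μ, ∀ k, p (T^[k] ξ) :=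
  ae_all_iff.2 fun k => (hT.iterate k).quasiMeasurePreserving.ae h

lemma Ergodic.ae_exists_iterate_succ_notMem {Ξ : Type*} [MeasurableSpace Ξ] {μ : Measure Ξ}
    [IsFiniteMeasure μ] {T : Ξ → Ξ} (hT : Ergodic T μ) {A : Set Ξ} (hA : MeasurableSet A)
    (hA_ae : ¬∀ᵐ ζ ∂μ, ζ ∈ A) : ∀ᵐ ξ ∂μ, ∃ k, T^[k + 1] ξ ∉ A := by
  set B : Set Ξ := ⋂ k : ℕ, T^[k + 1] ⁻¹' A
  have hB : MeasurableSet B := MeasurableSet.iInter fun k => hT.measurable.iterate _ hA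
  have hB_sub : B ⊆ T ⁻¹' B := fun ξ hξ => mem_iInter.2 fun k => by
    simpa only [mem_preimage, ← Function.iterate_succ_apply] using mem_iInter.1 hξ (k + 1)
  rcases hT.ae_empty_or_univ_of_ae_le_preimage hB.nullMeasurableSet hB_sub.eventuallyLE with
    h_empty | h_univ
  · filter_upwards [measure_eq_zero_iff_ae_notMem.1 (ae_eq_empty.1 h_empty)] with ξ hξ
    simpa [B] using hξ
  · refine absurd ?_ hA_ae
    have hB_ae : ∀ᵐ ξ ∂μ, ξ ∈ B := ae_eq_univ.1 h_univ
    have h_image : ∀ᵐ ξ ∂μ, T ξ ∈ A := hB_ae.mono fun ξ hξ => by simpa using mem_iInter.1 hξ 0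
    rwa [← hT.map_eq, ae_map_iff (p := (· ∈ A)) hT.measurable.aemeasurable hA]

theorem ergodic_delta_epiConv_general {X : Type*} [MetricSpace X] [PolishSpace X]
    {Ξ : Type*} [MeasurableSpace Ξ] (ℙ : Measure Ξ) [IsProbabilityMeasure ℙ]
    (T : Ξ → Ξ) (hT : Ergodic T ℙ)
    (M : Ξ → Set X) (hM_closed : ∀ ξ, IsClosed (M ξ)) (hM_meas : MeasurableMultifun M) :
    ∀ᵐ ξ ∂ℙ,
      EpiConv (fun n => delta (⋂ k ∈ Finset.Icc 1 n, M (T^[k] ξ)))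
        (delta {x : X | ∀ᵐ ζ ∂ℙ, x ∈ M ζ}) := by
  obtain ⟨D, hD_sub, hD_count, hD_dense⟩ :=
    (IsSeparable.of_separableSpace {x : X | ∀ᵐ ζ ∂ℙ, x ∈ M ζ}).exists_countable_dense_subset
  have hD : ∀ᵐ ξ ∂ℙ, ∀ d ∈ D, ∀ k, d ∈ M (T^[k] ξ) :=
    (ae_ball_iff hD_count).2 fun d hd => hT.toMeasurePreserving.ae_forall_iterate (hD_sub hd)
  have h_exit : ∀ᵐ ξ ∂ℙ, ∀ U ∈ countableBasis X, (¬∀ᵐ ζ ∂ℙ, (M ζ ∩ U).Nonempty) →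
      ∃ k, ¬(M (T^[k + 1] ξ) ∩ U).Nonempty := by
    refine (ae_ball_iff (countable_countableBasis X)).2 fun U hU => ?_
    by_cases h_ae : ∀ᵐ ζ ∂ℙ, (M ζ ∩ U).Nonempty
    · exact Eventually.of_forall fun _ h => absurd h_ae h
    · filter_upwards [hT.ae_exists_iterate_succ_notMem
        (hM_meas U (isOpen_of_mem_countableBasis hU)) h_ae] with ξ hξ _ using hξ
  filter_upwards [hD, h_exit] with ξ hD h_exit
  refine epiConv_delta_of_kuratowski (fun x u hu hfreq => ?_) fun x hx => ?_
  · by_contra hx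
    obtain ⟨U, hU, hxU, hU_ae⟩ : ∃ U ∈ countableBasis X, x ∈ U ∧
        ¬∀ᵐ ζ ∂ℙ, (M ζ ∩ U).Nonempty := by
      by_contra! h
      exact hx (ae_mem_of_forall_countableBasis hM_closed h)
    obtain ⟨k, hk⟩ := h_exit U hU hU_ae
    exact hk ⟨x, mem_of_tendsto_of_frequently_mem_biInter_Icc (hM_closed _) k.succ_pos hu hfreq,
      hxU⟩
  · obtain ⟨u, hu_mem, hu⟩ := mem_closure_iff_seq_limit.1 (hD_dense hx)
    exact ⟨u, hu, Eventually.of_forall fun n => mem_iInter₂.2 fun k _ => hD _ (hu_mem n) k⟩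

/-- for an ergodic measure-preserving `T` and a measurable closed-valued
multifunction `M`, for a.e. `ξ` the indicator functions of `E n ξ = ⋂_{k=1}^n M(T^k ξ)`
epi-converge to the indicator of `M_as = {x : x ∈ M ξ a.s.}`. -/
theorem ergodic_delta_epiConv {X : Type*} [MetricSpace X] [PolishSpace X]
    {Ξ : Type*} [MeasurableSpace Ξ] (ℙ : Measure Ξ) [IsProbabilityMeasure ℙ] [ℙ.IsComplete]
    (T : Ξ → Ξ) (hT : Ergodic T ℙ)
    (M : Ξ → Set X) (hM_closed : ∀ ξ, IsClosed (M ξ)) (hM_meas : MeasurableMultifun M) :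
    ∀ᵐ ξ ∂ℙ,
      EpiConv (fun n => delta (⋂ k ∈ Finset.Icc 1 n, M (T^[k] ξ)))
        (delta {x : X | ∀ᵐ ζ ∂ℙ, x ∈ M ζ}) :=
  ergodic_delta_epiConv_general ℙ T hT M hM_closed hM_meas
end
end

section
/- Let X be a Polish space, (Ξ, 𝒜, ℙ) a complete probability space, T : Ξ → Ξ an ergodic measure-preserving transformation, M : Ξ ⇉ X a measurable set-valued map with closed values, g : X → ℝ ∪ {+∞} lower semicontinuous, and g_n : X → ℝ ∪ {+∞} a sequence of lower semicontinuous functions converging continuously to g. Set E_n(ξ) := ⋂_{k=1}^n M(T^k(ξ)) and M_as := {x ∈ X : x ∈ M(ξ) for ℙ-a.e. ξ}. Assume the robust problem min{g(x) : x ∈ M_as} is feasible (there exists x ∈ M_as with g(x) < +∞) and that, for ℙ-a.e. ξ, the sequence g_n is eventually level-compact on E_n(ξ). Then for any measurable functions ε_n : Ξ → (0, +∞) with ε_n(ξ) → 0 for ℙ-a.e. ξ, one has, for ℙ-a.e. ξ ∈ Ξ: ∅ ≠ limsup_n (ε_n(ξ)-argmin_{E_n(ξ)} g_n) ⊆ argmin_{M_as}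 g, where limsup_n denotes the Painlevé–Kuratowski outer limit of sets. -/
/-!
For a.e. `ξ` the closed sets `E n ξ` decrease to `⋂ k ≥ 1, M (T^k ξ)`, and this intersection is
`M_as`. A point of `M_as` lies in every `M (T^k ξ)` almost surely, and by separability and
closedness countably many points suffice. Conversely, if `x ∉ M ζ` with positive probability,
then some basic open `U ∋ x` is missed by `M ζ` with positive probability, and by ergodicity the
orbit of `ξ` enters that event, so `x ∉ M (T^k ξ)` for some `k`.

What remains is deterministic. For every real `c > inf_{M_as} g`, testing at a point of `M_as`
where `g < c` shows that the `εₙ`-infimal values of `gₙ` on `Eₙ` are eventually `≤ c`. Hence the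
`εₙ`-minimisers eventually lie in one relatively compact sublevel set and have a cluster point,
and continuous convergence carries the bound `c` to every cluster point.
-/

open Filter Topology MeasureTheory Set
open scoped ENNReal

noncomputable section

lemma vOn_le {X : Type*} {h : X → EReal} {C : Set X} {x : X} (hx : x ∈ C) : vOn h C ≤ h x :=
  biInf_le h hx

lemma vOn_lt_iff {X : Type*} {h : X → EReal} {C : Set X} {c : EReal} :
    vOn h C < c ↔ ∃ x ∈ C, h x < c := by
  simp [vOn, iInf_lt_iff]

lemma vEpsOn_zero {X : Type*} (h : X → EReal) (C : Set X) : vEpsOn h C 0 = vOn h C := by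
  unfold vEpsOn
  split_ifs with hv <;> simp_all

lemma vEpsOn_le_coe {X : Type*} {h : X → EReal} {C : Set X} {ε γ c : ℝ} (hε : 0 < ε)
    (hv : vOn h C ≤ γ) (hγ : γ + ε ≤ c) (hinv : -ε⁻¹ ≤ c) : vEpsOn h C ε ≤ c := by
  unfold vEpsOn
  split_ifs with hbot hε0
  · exact absurd hε0 hε.ne'
  · exact EReal.coe_le_coe_iff.2 hinv
  · calc vOn h C + ε ≤ (γ : EReal) + ε := by gcongr
      _ ≤ c := by exact_mod_cast hγ

lemma argminOn_nonempty {X : Type*} {h : X → EReal} {C : Set X} {ε : ℝ} (hC : C.Nonempty)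
    (hε : 0 < ε) : (argminOn h C ε).Nonempty := by
  suffices hlt : vOn h C < vEpsOn h C ε ∨ vEpsOn h C ε = ⊤ by
    rcases hlt with hlt | htop
    · obtain ⟨x, hxC, hx⟩ := vOn_lt_iff.1 hlt
      exact ⟨x, hxC, hx.le⟩
    · obtain ⟨x, hxC⟩ := hC
      exact ⟨x, hxC, htop ▸ le_top⟩
  unfold vEpsOn
  split_ifs with hbot hε0
  · exact absurd hε0 hε.ne'
  · exact Or.inl (hbot ▸ EReal.bot_lt_coe _)
  · by_cases htop : vOn h C = ⊤
    · exact Or.inr (by rw [htop, EReal.top_add_coe])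
    · lift vOn h C to ℝ using ⟨htop, hbot⟩ with r
      exact Or.inl (by exact_mod_cast lt_add_of_pos_right r hε)

lemma EReal.le_of_forall_coe_gt {a b : EReal} (h : ∀ c : ℝ, b < c → a ≤ c) : a ≤ b :=
  le_of_forall_gt_imp_ge_of_dense fun d hbd => by
    obtain ⟨c, hbc, hcd⟩ := EReal.lt_iff_exists_real_btwn.1 hbd
    exact (h c hbc).trans hcd.le

lemma iInter_biInter_Icc_one_eq {α : Type*} (S : ℕ → Set α) :
    ⋂ n, ⋂ k ∈ Finset.Icc 1 n, S k = ⋂ k, S (k + 1) := by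
  ext x
  simp only [mem_iInter, Finset.mem_Icc]
  exact ⟨fun h k => h (k + 1) (k + 1) ⟨k.succ_pos, le_rfl⟩,
    fun h n k ⟨hk, _⟩ => Nat.succ_pred_eq_of_pos hk ▸ h (k - 1)⟩

lemma Antitone.mem_iInter_of_tendsto {X : Type*} [TopologicalSpace X] {E : ℕ → Set X}
    (hE : Antitone E) (hE_closed : ∀ n, IsClosed (E n)) {φ : ℕ → ℕ}
    (hφ : Tendsto φ atTop atTop) {y : ℕ → X} {x : X} (hy : ∀ j, y j ∈ E (φ j))
    (hyx : Tendsto y atTop (𝓝 x)) : x ∈ ⋂ n, E n :=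
  mem_iInter.2 fun n => (hE_closed n).mem_of_tendsto hyx <|
    (hφ.eventually_ge_atTop n).mono fun j hj => hE hj (hy j)

section OuterLimit

variable {X : Type*} [MetricSpace X] {S : ℕ → Set X} {x : X}

lemma mem_outerLim_iff_frequently :
    x ∈ outerLim S ↔ ∀ δ > 0, ∃ᶠ n in atTop, ∃ y ∈ S n, edist x y < δ := by
  simp only [← Metric.infEDist_lt_iff]
  exact nonpos_iff_eq_zero.symm.trans liminf_le_iff

lemma mem_outerLim_of_tendsto {φ : ℕ → ℕ} (hφ : Tendsto φ atTop atTop) {y : ℕ → X}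
    (hy : ∀ j, y j ∈ S (φ j)) (hyx : Tendsto y atTop (𝓝 x)) : x ∈ outerLim S :=
  mem_outerLim_iff_frequently.2 fun δ hδ => hφ.frequently <|
    ((EMetric.tendsto_nhds.1 hyx δ hδ).mono fun j hj => ⟨y j, hy j, by rwa [edist_comm]⟩).frequently

lemma exists_strictMono_tendsto_of_mem_outerLim (hx : x ∈ outerLim S) :
    ∃ φ : ℕ → ℕ, ∃ y : ℕ → X, StrictMono φ ∧ (∀ j, y j ∈ S (φ j)) ∧ Tendsto y atTop (𝓝 x) := by
  have hfreq (j : ℕ) : ∃ᶠ n in atTop, ∃ y ∈ S n, edist x y < ((j + 1 : ℕ) : ℝ≥0∞)⁻¹ :=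
    mem_outerLim_iff_frequently.1 hx _ (ENNReal.inv_pos.2 (ENNReal.natCast_ne_top _))
  obtain ⟨φ, hφ, hφS⟩ := extraction_forall_of_frequently hfreq
  choose y hyS hyx using hφS
  refine ⟨φ, y, hφ, hyS, EMetric.tendsto_nhds.2 fun δ hδ => ?_⟩
  have hinv : Tendsto (fun j : ℕ => ((j + 1 : ℕ) : ℝ≥0∞)⁻¹) atTop (𝓝 0) :=
    ENNReal.tendsto_inv_nat_nhds_zero.comp (tendsto_add_atTop_nat 1)
  filter_upwards [hinv.eventually_lt_const hδ] with j hj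
  exact edist_comm x (y j) ▸ (hyx j).trans hj

end OuterLimit

section ArgminStability

variable {X : Type*} {gn : ℕ → X → EReal} {g : X → EReal} {E : ℕ → Set X} {ε : ℕ → ℝ}

lemma eventually_vEpsOn_le (hg : ∀ x, Tendsto (fun n => gn n x) atTop (𝓝 (g x)))
    (hε_pos : ∀ n, 0 < ε n) (hε : Tendsto ε atTop (𝓝 0)) {c : ℝ} (hc : vOn g (⋂ n, E n) < c) :
    ∀ᶠ n in atTop, vEpsOn (gn n) (E n) (ε n) ≤ c := by
  obtain ⟨w, hwE, hwc⟩ := vOn_lt_iff.1 hc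
  obtain ⟨γ, hwγ, hγc⟩ := EReal.lt_iff_exists_real_btwn.1 hwc
  have hγc' : γ < c := EReal.coe_lt_coe_iff.1 hγc
  have hinv : Tendsto (fun n => -(ε n)⁻¹) atTop atBot :=
    tendsto_neg_atTop_atBot.comp <| tendsto_inv_nhdsGT_zero.comp <|
      tendsto_nhdsWithin_iff.2 ⟨hε, Eventually.of_forall hε_pos⟩
  filter_upwards [(hg w).eventually_lt_const hwγ, hε.eventually_lt_const (sub_pos.2 hγc'),
    hinv.eventually_le_atBot c] with n hwn hεn hinvn
  exact vEpsOn_le_coe (hε_pos n) ((vOn_le (mem_iInter.1 hwE n)).trans hwn.le)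
    (by linarith) hinvn

variable [MetricSpace X]

lemma ContConv.tendsto_comp_strictMono (hcc : ContConv gn g) {φ : ℕ → ℕ} (hφ : StrictMono φ)
    {y : ℕ → X} {x : X} (hyx : Tendsto y atTop (𝓝 x)) :
    Tendsto (fun j => gn (φ j) (y j)) atTop (𝓝 (g x)) := by
  -- `y` is the subsequence `u ∘ φ` of a sequence `u → x`.
  let u := Function.extend φ y fun _ => x
  have hu : ∀ j, u (φ j) = y j := hφ.injective.extend_apply y _
  suffices hux : Tendsto u atTop (𝓝 x) by
    simpa only [Function.comp_def, hu] using (hcc x u hux).comp hφ.tendsto_atTop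
  refine tendsto_atTop'.2 fun V hV => ?_
  obtain ⟨J, hJ⟩ := tendsto_atTop'.1 hyx V hV
  refine ⟨φ J, fun n hn => ?_⟩
  by_cases hn' : ∃ j, φ j = n
  · obtain ⟨j, rfl⟩ := hn'
    exact (hu j).symm ▸ hJ j (hφ.le_iff_le.1 hn)
  · rw [show u n = x from Function.extend_apply' y _ n hn']
    exact mem_of_mem_nhds hV

lemma EvLevelCompact.exists_strictMono_tendsto (hlc : EvLevelCompact gn E) {x : ℕ → X}
    (hxE : ∀ n, x n ∈ E n) {c : ℝ} (hxc : ∀ᶠ n in atTop, gn n (x n) ≤ c) :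
    ∃ z, ∃ φ : ℕ → ℕ, StrictMono φ ∧ Tendsto (x ∘ φ) atTop (𝓝 z) := by
  obtain ⟨N₁, hN₁⟩ := eventually_atTop.1 hxc
  obtain ⟨N₂, hK⟩ := hlc c
  have hmem (j : ℕ) : x (j + max N₁ N₂) ∈ closure (⋃ n ∈ Ici N₂, {y ∈ E n | gn n y ≤ c}) :=
    subset_closure <| mem_biUnion (mem_Ici.2 ((le_max_right N₁ N₂).trans (Nat.le_add_left _ _)))
      ⟨hxE _, hN₁ _ ((le_max_left N₁ N₂).trans (Nat.le_add_left _ _))⟩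
  obtain ⟨z, -, φ, hφ, hz⟩ := hK.tendsto_subseq hmem
  exact ⟨z, (· + max N₁ N₂) ∘ φ, (strictMono_id.add_const _).comp hφ, hz⟩

lemma outerLim_argminOn_nonempty (hg : ∀ x, Tendsto (fun n => gn n x) atTop (𝓝 (g x)))
    (hfeas : vOn g (⋂ n, E n) < ⊤) (hlc : EvLevelCompact gn E) (hε_pos : ∀ n, 0 < ε n)
    (hε : Tendsto ε atTop (𝓝 0)) :
    (outerLim fun n => argminOn (gn n) (E n) (ε n)).Nonempty := by
  obtain ⟨c, hc, -⟩ := EReal.lt_iff_exists_real_btwn.1 hfeas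
  obtain ⟨w, hwE, -⟩ := vOn_lt_iff.1 hfeas
  choose x hx using fun n => argminOn_nonempty (h := gn n) ⟨w, mem_iInter.1 hwE n⟩ (hε_pos n)
  obtain ⟨z, φ, hφ, hz⟩ := hlc.exists_strictMono_tendsto (fun n => (hx n).1)
    ((eventually_vEpsOn_le hg hε_pos hε hc).mono fun n hn => (hx n).2.trans hn)
  exact ⟨z, mem_outerLim_of_tendsto hφ.tendsto_atTop (fun j => hx (φ j)) hz⟩

lemma outerLim_argminOn_subset (hcc : ContConv gn g) (hE : Antitone E)
    (hE_closed : ∀ n, IsClosed (E n)) (hε_pos : ∀ n, 0 < ε n) (hε : Tendsto ε atTop (𝓝 0)) :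
    outerLim (fun n => argminOn (gn n) (E n) (ε n)) ⊆ argminOn g (⋂ n, E n) 0 := by
  intro x hx
  obtain ⟨φ, y, hφ, hy, hyx⟩ := exists_strictMono_tendsto_of_mem_outerLim hx
  have hgy := hcc.tendsto_comp_strictMono hφ hyx
  refine ⟨hE.mem_iInter_of_tendsto hE_closed hφ.tendsto_atTop (fun j => (hy j).1) hyx, ?_⟩
  rw [vEpsOn_zero]
  refine EReal.le_of_forall_coe_gt fun c hc => le_of_tendsto hgy ?_
  filter_upwards [hφ.tendsto_atTop.eventually
    (eventually_vEpsOn_le (fun x => hcc x _ tendsto_const_nhds) hε_pos hε hc)] with j hj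
  exact (hy j).2.trans hj

end ArgminStability

section ErgodicIntersection

open TopologicalSpace

variable {Ξ : Type*} [MeasurableSpace Ξ] {ℙ : Measure Ξ} {T : Ξ → Ξ}

lemma Ergodic.ae_exists_iterate_mem [IsFiniteMeasure ℙ] (hT : Ergodic T ℙ) {A : Set Ξ}
    (hA : NullMeasurableSet A ℙ) (hA_pos : ℙ A ≠ 0) : ∀ᵐ ξ ∂ℙ, ∃ k, T^[k] ξ ∈ A := by
  set B := ⋃ k, T^[k] ⁻¹' A
  have hB : NullMeasurableSet B ℙ := .iUnion fun k =>
    hA.preimage (hT.toMeasurePreserving.iterate k).quasiMeasurePreserving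
  have hTB : T ⁻¹' B ⊆ B := fun ξ hξ => by
    obtain ⟨k, hk⟩ := mem_iUnion.1 hξ
    exact mem_iUnion.2 ⟨k + 1, hk⟩
  rcases hT.ae_empty_or_univ_of_preimage_ae_le hB hTB.eventuallyLE with hempty | huniv
  · exact absurd (measure_mono_null (subset_iUnion (fun k => T^[k] ⁻¹' A) 0)
      (measure_eq_zero_iff_ae_notMem.2 (hempty.mono fun ξ h => h.to_iff.1))) hA_pos
  · exact huniv.mem_iff.mono fun ξ h => mem_iUnion.1 (h.2 trivial)

variable {X : Type*} [TopologicalSpace X] [SecondCountableTopology X] {M : Ξ → Set X}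

lemma Ergodic.ae_iInter_iterate_subset [IsFiniteMeasure ℙ] (hT : Ergodic T ℙ)
    (hM_closed : ∀ ξ, IsClosed (M ξ)) (hM_meas : MeasurableMultifun M) :
    ∀ᵐ ξ ∂ℙ, ⋂ k, M (T^[k] ξ) ⊆ {x | ∀ᵐ ζ ∂ℙ, x ∈ M ζ} := by
  set b := countableBasis X
  set A : Set X → Set Ξ := fun U => {ζ | (M ζ ∩ U).Nonempty}ᶜ
  have hvisit : ∀ᵐ ξ ∂ℙ, ∀ U ∈ {U ∈ b | ℙ (A U) ≠ 0}, ∃ k, T^[k] ξ ∈ A U :=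
    (ae_ball_iff ((countable_countableBasis X).mono (sep_subset _ _))).2 fun U hU =>
      hT.ae_exists_iterate_mem
        (hM_meas U (isOpen_of_mem_countableBasis hU.1)).compl.nullMeasurableSet hU.2
  filter_upwards [hvisit] with ξ hξ x hx
  by_contra hxM
  have hcover : {ζ | x ∉ M ζ} ⊆ ⋃ U ∈ {U ∈ b | x ∈ U}, A U := fun ζ hζ => by
    obtain ⟨U, hUb, hxU, hUM⟩ := (isBasis_countableBasis X).exists_subset_of_mem_open
      hζ (hM_closed ζ).isOpen_compl
    exact mem_biUnion ⟨hUb, hxU⟩ fun ⟨y, hyM, hyU⟩ => hUM hyU hyM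
  obtain ⟨U, ⟨hUb, hxU⟩, hpos⟩ : ∃ U ∈ {U ∈ b | x ∈ U}, ℙ (A U) ≠ 0 := by
    by_contra! hnull
    exact hxM (ae_iff.2 (measure_mono_null hcover
      ((measure_biUnion_null_iff ((countable_countableBasis X).mono
        (sep_subset _ _))).2 hnull)))
  obtain ⟨k, hk⟩ := hξ U ⟨hUb, hpos⟩
  exact hk ⟨x, mem_iInter.1 hx k, hxU⟩

lemma MeasureTheory.MeasurePreserving.ae_setOf_ae_mem_subset_iInter_iterate
    [PseudoMetrizableSpace X] (hT : MeasurePreserving T ℙ ℙ) (hM_closed : ∀ ξ, IsClosed (M ξ)) :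
    ∀ᵐ ξ ∂ℙ, {x | ∀ᵐ ζ ∂ℙ, x ∈ M ζ} ⊆ ⋂ k, M (T^[k] ξ) := by
  obtain ⟨t, htM, htc, hdense⟩ :=
    (IsSeparable.of_separableSpace {x | ∀ᵐ ζ ∂ℙ, x ∈ M ζ}).exists_countable_dense_subset
  have ht : ∀ᵐ ξ ∂ℙ, ∀ x ∈ t, ∀ k, x ∈ M (T^[k] ξ) :=
    (ae_ball_iff htc).2 fun x hx => ae_all_iff.2 fun k =>
      (hT.iterate k).quasiMeasurePreserving.ae (htM hx)
  filter_upwards [ht] with ξ hξ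
  exact hdense.trans <| subset_iInter fun k =>
    closure_minimal (fun x hx => hξ x hx k) (hM_closed _)

lemma Ergodic.ae_iInter_iterate_eq [IsFiniteMeasure ℙ] [PseudoMetrizableSpace X]
    (hT : Ergodic T ℙ) (hM_closed : ∀ ξ, IsClosed (M ξ)) (hM_meas : MeasurableMultifun M) :
    ∀ᵐ ξ ∂ℙ, ⋂ k, M (T^[k] ξ) = {x | ∀ᵐ ζ ∂ℙ, x ∈ M ζ} := by
  filter_upwards [hT.ae_iInter_iterate_subset hM_closed hM_meas,
    hT.toMeasurePreserving.ae_setOf_ae_mem_subset_iInter_iterate hM_closed] with ξ h₁ h₂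
  exact h₁.antisymm h₂

end ErgodicIntersection

theorem ergodic_argmin_convergence_general {X : Type*} [MetricSpace X] [PolishSpace X]
    {Ξ : Type*} [MeasurableSpace Ξ] (ℙ : Measure Ξ) [IsProbabilityMeasure ℙ]
    (T : Ξ → Ξ) (hT : Ergodic T ℙ)
    (M : Ξ → Set X) (hM_closed : ∀ ξ, IsClosed (M ξ)) (hM_meas : MeasurableMultifun M)
    (g : X → EReal) (gn : ℕ → X → EReal)
    (hcc : ContConv gn g)
    (hfeas : ∃ x ∈ {y : X | ∀ᵐ ζ ∂ℙ, y ∈ M ζ}, g x < ⊤)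
    (hlc : ∀ᵐ ξ ∂ℙ, EvLevelCompact gn (fun n => ⋂ k ∈ Finset.Icc 1 n, M (T^[k] ξ)))
    (εn : ℕ → Ξ → ℝ) (hεn_pos : ∀ n ξ, 0 < εn n ξ)
    (hεn_to0 : ∀ᵐ ξ ∂ℙ, Tendsto (fun n => εn n ξ) atTop (𝓝 0)) :
    ∀ᵐ ξ ∂ℙ,
      (outerLim (fun n =>
          argminOn (gn n) (⋂ k ∈ Finset.Icc 1 n, M (T^[k] ξ)) (εn n ξ))).Nonempty ∧
      outerLim (fun n =>
          argminOn (gn n) (⋂ k ∈ Finset.Icc 1 n, M (T^[k] ξ)) (εn n ξ)) ⊆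
        argminOn g {y : X | ∀ᵐ ζ ∂ℙ, y ∈ M ζ} 0 := by
  have hMas := hT.toMeasurePreserving.quasiMeasurePreserving.ae
    (hT.ae_iInter_iterate_eq hM_closed hM_meas)
  filter_upwards [hMas, hlc, hεn_to0] with ξ hMasξ hlcξ hεξ
  have hE : ⋂ n, ⋂ k ∈ Finset.Icc 1 n, M (T^[k] ξ) = {y : X | ∀ᵐ ζ ∂ℙ, y ∈ M ζ} := by
    simpa only [iInter_biInter_Icc_one_eq, Function.iterate_succ_apply] using hMasξ
  have hanti : Antitone fun n => ⋂ k ∈ Finset.Icc 1 n, M (T^[k] ξ) := fun m n hmn =>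
    iInter₂_mono' fun k hk => ⟨k, Finset.Icc_subset_Icc_right hmn hk, subset_rfl⟩
  obtain ⟨x, hx, hgx⟩ := hfeas
  rw [← hE] at hx ⊢
  exact ⟨outerLim_argminOn_nonempty (fun x => hcc x _ tendsto_const_nhds)
      ((vOn_le hx).trans_lt hgx) hlcξ (hεn_pos · ξ) hεξ,
    outerLim_argminOn_subset hcc hanti (fun n => isClosed_biInter fun k _ => hM_closed _)
      (hεn_pos · ξ) hεξ⟩

/-- if the robust problem is feasible, `g n` is eventually level-compact
on `E n ξ` a.s., and `ε n ξ → 0` a.s. with `ε n > 0` measurable, then for a.e. `ξ`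
the outer limit of the `ε n ξ`-argmins of `g n` on `E n ξ` is nonempty and contained
in the argmin of `g` on `M_as`. -/
theorem ergodic_argmin_convergence {X : Type*} [MetricSpace X] [PolishSpace X]
    {Ξ : Type*} [MeasurableSpace Ξ] (ℙ : Measure Ξ) [IsProbabilityMeasure ℙ] [ℙ.IsComplete]
    (T : Ξ → Ξ) (hT : Ergodic T ℙ)
    (M : Ξ → Set X) (hM_closed : ∀ ξ, IsClosed (M ξ)) (hM_meas : MeasurableMultifun M)
    (g : X → EReal) (gn : ℕ → X → EReal)
    (hg_noBot : ∀ x, g x ≠ ⊥) (hgn_noBot : ∀ n x, gn n x ≠ ⊥)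
    (hg_lsc : LowerSemicontinuous g) (hgn_lsc : ∀ n, LowerSemicontinuous (gn n))
    (hcc : ContConv gn g)
    (hfeas : ∃ x ∈ {y : X | ∀ᵐ ζ ∂ℙ, y ∈ M ζ}, g x < ⊤)
    (hlc : ∀ᵐ ξ ∂ℙ, EvLevelCompact gn (fun n => ⋂ k ∈ Finset.Icc 1 n, M (T^[k] ξ)))
    (εn : ℕ → Ξ → ℝ) (hεn_meas : ∀ n, Measurable (εn n)) (hεn_pos : ∀ n ξ, 0 < εn n ξ)
    (hεn_to0 : ∀ᵐ ξ ∂ℙ, Tendsto (fun n => εn n ξ) atTop (𝓝 0)) :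
    ∀ᵐ ξ ∂ℙ,
      (outerLim (fun n =>
          argminOn (gn n) (⋂ k ∈ Finset.Icc 1 n, M (T^[k] ξ)) (εn n ξ))).Nonempty ∧
      outerLim (fun n =>
          argminOn (gn n) (⋂ k ∈ Finset.Icc 1 n, M (T^[k] ξ)) (εn n ξ)) ⊆
        argminOn g {y : X | ∀ᵐ ζ ∂ℙ, y ∈ M ζ} 0 :=
  ergodic_argmin_convergence_general ℙ T hT M hM_closed hM_meas g gn hcc hfeas hlc εn hεn_pos
    hεn_to0
end
end

section
/- Let X be a Polish space, (Ξ, 𝒜, ℙ) a complete probability space with countable product (Ξ^∞, 𝒜^∞, ℙ^∞), M : Ξ ⇉ X a measurable set-valued map with closed values, g : X → ℝ ∪ {+∞} lower semicontinuous, and g_n : X → ℝ ∪ {+∞} a sequence of lower semicontinuous functions converging continuously to g. For ω = (ξ_k)_{k≥1} set S_n(ω) := ⋂_{k=1}^n M(ξ_k) and M_as := {x ∈ X : x ∈ M(ξ) for ℙ-a.e. ξ}. Assume the robust problem min{g(x) : x ∈ M_as} is feasible (there exists x ∈ M_as with g(x) < +∞) and that, for ℙ^∞-a.e. ω, the sequence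 g_n is eventually level-compact on S_n(ω). Then for ℙ^∞-a.e. ω ∈ Ξ^∞, the optimal values of the scenario problems converge to the robust optimal value: lim_n v(g_n, S_n(ω)) = v(g, M_as). -/
open Filter Topology MeasureTheory Set

noncomputable section

/-
Almost surely the scenario sets `S n ω = ⋂_{k<n} M (ω k)` decrease to `M_as`: a countable dense
subset of `M_as` lies in every sample `M (ω k)` almost surely, and a basic open set that `M ξ`
misses with positive probability is missed by some sample almost surely. For closed sets
decreasing to `C`, continuous convergence gives `limsup v(gₙ, Sₙ) ≤ v(g, C)`; and eventual
level-compactness turns near-minimizers of `gₙ` on `Sₙ` into a convergent subsequence whose limit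
lies in `C`, which gives `v(g, C) ≤ liminf v(gₙ, Sₙ)`.
-/

namespace IsProductMeasure

variable {Ξ : Type*} [MeasurableSpace Ξ] {ℙ : Measure Ξ} {P : Measure (ℕ → Ξ)}

theorem map_eval (hP : IsProductMeasure P ℙ) (k : ℕ) : P.map (fun ω => ω k) = ℙ := by
  ext A hA
  rw [Measure.map_apply (measurable_pi_apply k) hA]
  simpa [Set.preimage] using hP {k} (fun _ => A) (fun _ => hA)

theorem ae_eval (hP : IsProductMeasure P ℙ) {p : Ξ → Prop} (h : ∀ᵐ ξ ∂ℙ, p ξ) (k : ℕ) :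
    ∀ᵐ ω ∂P, p (ω k) :=
  ae_of_ae_map (measurable_pi_apply k).aemeasurable (by rwa [hP.map_eval k])

theorem ae_exists_eval_notMem [IsProbabilityMeasure ℙ] (hP : IsProductMeasure P ℙ)
    {A : Set Ξ} (hA : MeasurableSet A) (hAc : ℙ Aᶜ ≠ 0) : ∀ᵐ ω ∂P, ∃ k, ω k ∉ A := by
  have hA_lt : ℙ A < 1 := by
    rw [Ne, prob_compl_eq_zero_iff hA] at hAc
    exact lt_of_le_of_ne prob_le_one hAc
  have hle : ∀ n, P {ω | ∀ k, ω k ∈ A} ≤ ℙ A ^ n := fun n =>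
    calc P {ω | ∀ k, ω k ∈ A} ≤ P {ω | ∀ k ∈ Finset.range n, ω k ∈ A} :=
          measure_mono fun ω hω k _ => hω k
      _ = ℙ A ^ n := by simpa using hP (Finset.range n) (fun _ => A) (fun _ => hA)
  have hnull : P {ω | ∀ k, ω k ∈ A} = 0 :=
    le_antisymm (ge_of_tendsto' (ENNReal.tendsto_pow_atTop_nhds_zero_of_lt_one hA_lt) hle)
      zero_le
  rw [ae_iff]
  simpa using hnull

end IsProductMeasure

section Multifun

open TopologicalSpace

variable {Ξ X : Type*} [MeasurableSpace Ξ] [TopologicalSpace X] {M : Ξ → Set X}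
  {ℙ : Measure Ξ} [IsProbabilityMeasure ℙ] {P : Measure (ℕ → Ξ)}

theorem MeasurableMultifun.ae_exists_inter_eq_empty (hM_meas : MeasurableMultifun M)
    (hP : IsProductMeasure P ℙ) {U : Set X} (hU : IsOpen U) :
    ∀ᵐ ω ∂P, ℙ {ξ | M ξ ∩ U = ∅} ≠ 0 → ∃ k, M (ω k) ∩ U = ∅ := by
  by_cases hpos : ℙ {ξ | M ξ ∩ U = ∅} = 0
  · exact ae_of_all _ fun ω h => absurd hpos h
  have hcompl : {ξ | (M ξ ∩ U).Nonempty}ᶜ = {ξ | M ξ ∩ U = ∅} := by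
    ext ξ; simp [not_nonempty_iff_eq_empty]
  filter_upwards [hP.ae_exists_eval_notMem (hM_meas U hU) (hcompl ▸ hpos)] with ω ⟨k, hk⟩
  exact fun _ => ⟨k, not_nonempty_iff_eq_empty.1 hk⟩

theorem ae_iInter_eq_essInter [PseudoMetrizableSpace X] [SecondCountableTopology X]
    (hP : IsProductMeasure P ℙ) (hM_closed : ∀ ξ, IsClosed (M ξ))
    (hM_meas : MeasurableMultifun M) :
    ∀ᵐ ω ∂P, ⋂ k, M (ω k) = {x | ∀ᵐ ξ ∂ℙ, x ∈ M ξ} := by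
  set Mas := {x | ∀ᵐ ξ ∂ℙ, x ∈ M ξ}
  obtain ⟨D, hD_sub, hD_count, hD_dense⟩ :=
    (IsSeparable.of_separableSpace Mas).exists_countable_dense_subset
  have hD : ∀ᵐ ω ∂P, ∀ k, ∀ x ∈ D, x ∈ M (ω k) := by
    rw [ae_all_iff]
    exact fun k => (ae_ball_iff hD_count).2 fun x hx => hP.ae_eval (hD_sub hx) k
  set B := countableBasis X
  have hB : ∀ᵐ ω ∂P, ∀ U ∈ B, ℙ {ξ | M ξ ∩ U = ∅} ≠ 0 → ∃ k, M (ω k) ∩ U = ∅ :=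
    (ae_ball_iff (countable_countableBasis X)).2 fun U hU =>
      hM_meas.ae_exists_inter_eq_empty hP (isOpen_of_mem_countableBasis hU)
  filter_upwards [hD, hB] with ω hDω hBω
  refine Subset.antisymm (fun x hx => ?_) fun x hx => mem_iInter.2 fun k =>
    (hM_closed (ω k)).closure_subset_iff.2 (hDω k) (hD_dense hx)
  -- Were `x ∉ Mas`, some basic neighbourhood of `x` would miss `M ξ` with positive probability.
  by_contra hx_notMem
  have hsep : {ξ | x ∉ M ξ} ⊆ ⋃ U ∈ {U ∈ B | x ∈ U}, {ξ | M ξ ∩ U = ∅} := fun ξ hξ => by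
    obtain ⟨U, hUB, hxU, hUM⟩ := (isBasis_countableBasis X).exists_subset_of_mem_open
      hξ (hM_closed ξ).isOpen_compl
    exact mem_biUnion ⟨hUB, hxU⟩ (subset_compl_iff_disjoint_left.1 hUM).eq_bot
  have hcount : {U ∈ B | x ∈ U}.Countable :=
    (countable_countableBasis X).mono (sep_subset _ _)
  obtain ⟨U, ⟨hUB, hxU⟩, hU⟩ : ∃ U ∈ {U ∈ B | x ∈ U}, ℙ {ξ | M ξ ∩ U = ∅} ≠ 0 := by
    by_contra! h
    exact hx_notMem (measure_mono_null hsep ((measure_biUnion_null_iff hcount).2 h))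
  obtain ⟨k, hk⟩ := hBω U hUB hU
  exact (eq_empty_iff_forall_notMem.1 hk) x ⟨mem_iInter.1 hx k, hxU⟩

end Multifun

section ScenarioValues

variable {X : Type*} [MetricSpace X] {gn : ℕ → X → EReal} {g : X → EReal} {S : ℕ → Set X}

theorem ContConv.tendsto_comp_subseq (hcc : ContConv gn g) {σ : ℕ → ℕ} (hσ : StrictMono σ)
    {y : ℕ → X} {x : X} (hy : Tendsto y atTop (𝓝 x)) :
    Tendsto (fun j => gn (σ j) (y j)) atTop (𝓝 (g x)) := by
  have hu : Tendsto (Function.extend σ y fun _ => x) atTop (𝓝 x) := by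
    rw [tendsto_atTop'] at hy ⊢
    intro s hs
    obtain ⟨J, hJ⟩ := hy s hs
    refine ⟨σ J, fun n hn => ?_⟩
    by_cases hn_range : ∃ j, σ j = n
    · obtain ⟨j, rfl⟩ := hn_range
      rw [hσ.injective.extend_apply]
      exact hJ j (hσ.le_iff_le.1 hn)
    · rw [Function.extend_apply' _ _ _ hn_range]
      exact mem_of_mem_nhds hs
  simpa [Function.comp_def, hσ.injective.extend_apply] using
    (hcc x _ hu).comp hσ.tendsto_atTop

theorem ContConv.limsup_vOn_le (hcc : ContConv gn g) {C : Set X} (hC : ∀ n, C ⊆ S n) :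
    atTop.limsup (fun n => vOn (gn n) (S n)) ≤ vOn g C :=
  le_iInf₂ fun x hx => (hcc x _ tendsto_const_nhds).limsup_eq ▸
    limsup_le_limsup (Eventually.of_forall fun n => iInf₂_le x (hC n hx))

theorem EvLevelCompact.exists_tendsto_subseq (hlc : EvLevelCompact gn S) {α : ℝ}
    (hα : atTop.liminf (fun n => vOn (gn n) (S n)) < α) :
    ∃ (σ : ℕ → ℕ) (y : ℕ → X) (x : X), StrictMono σ ∧
      (∀ j, y j ∈ S (σ j) ∧ gn (σ j) (y j) < α) ∧ Tendsto y atTop (𝓝 x) := by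
  obtain ⟨N, hK⟩ := hlc α
  obtain ⟨φ, hφ, hφN⟩ := extraction_of_frequently_atTop
    ((eventually_ge_atTop N).and_frequently (frequently_lt_of_liminf_lt (by isBoundedDefault) hα))
  have hmin : ∀ j, ∃ y ∈ S (φ j), gn (φ j) y < α := fun j => by
    simpa [vOn, iInf_lt_iff] using (hφN j).2
  choose y hyS hylt using hmin
  obtain ⟨x, -, ψ, hψ, hyx⟩ := hK.tendsto_subseq fun j =>
    subset_closure (mem_biUnion (hφN j).1 ⟨hyS j, (hylt j).le⟩)
  exact ⟨φ ∘ ψ, y ∘ ψ, x, hφ.comp hψ, fun j => ⟨hyS _, hylt _⟩, hyx⟩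

theorem ContConv.vOn_iInter_le_liminf (hcc : ContConv gn g) (hS : Antitone S)
    (hS_closed : ∀ n, IsClosed (S n)) (hlc : EvLevelCompact gn S) :
    vOn g (⋂ n, S n) ≤ atTop.liminf (fun n => vOn (gn n) (S n)) := by
  by_contra! hlt
  obtain ⟨α, hα_liminf, hα_v⟩ := EReal.exists_between_coe_real hlt
  obtain ⟨σ, y, x, hσ, hy, hyx⟩ := hlc.exists_tendsto_subseq hα_liminf
  have hx : x ∈ ⋂ n, S n := mem_iInter.2 fun n => (hS_closed n).mem_of_tendsto hyx <|
    (hσ.tendsto_atTop.eventually_ge_atTop n).mono fun j hj => hS hj (hy j).1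
  have hgx : g x ≤ α :=
    le_of_tendsto (hcc.tendsto_comp_subseq hσ hyx) (Eventually.of_forall fun j => (hy j).2.le)
  exact ((iInf₂_le x hx).trans hgx).not_gt hα_v

theorem ContConv.tendsto_vOn_iInter (hcc : ContConv gn g) (hS : Antitone S)
    (hS_closed : ∀ n, IsClosed (S n)) (hlc : EvLevelCompact gn S) :
    Tendsto (fun n => vOn (gn n) (S n)) atTop (𝓝 (vOn g (⋂ n, S n))) :=
  tendsto_of_le_liminf_of_limsup_le (hcc.vOn_iInter_le_liminf hS hS_closed hlc)
    (hcc.limsup_vOn_le (iInter_subset S))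

end ScenarioValues

theorem scenario_value_convergence_general {X : Type*} [MetricSpace X] [PolishSpace X]
    {Ξ : Type*} [MeasurableSpace Ξ] (ℙ : Measure Ξ) [IsProbabilityMeasure ℙ]
    (P : Measure (ℕ → Ξ)) (hP : IsProductMeasure P ℙ)
    (M : Ξ → Set X) (hM_closed : ∀ ξ, IsClosed (M ξ)) (hM_meas : MeasurableMultifun M)
    (g : X → EReal) (gn : ℕ → X → EReal)
    (hcc : ContConv gn g)
    (hlc : ∀ᵐ ω ∂P, EvLevelCompact gn (fun n => ⋂ k ∈ Finset.range n, M (ω k))) :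
    ∀ᵐ ω ∂P,
      Tendsto (fun n => vOn (gn n) (⋂ k ∈ Finset.range n, M (ω k))) atTop
        (𝓝 (vOn g {y : X | ∀ᵐ ζ ∂ℙ, y ∈ M ζ})) := by
  filter_upwards [ae_iInter_eq_essInter hP hM_closed hM_meas, hlc] with ω hω hlcω
  have hS : Antitone fun n => ⋂ k ∈ Finset.range n, M (ω k) := fun m n hmn =>
    biInter_subset_biInter_left fun k hk => Finset.range_mono hmn hk
  have hS_iInter : ⋂ n, ⋂ k ∈ Finset.range n, M (ω k) = ⋂ k, M (ω k) := by
    ext x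
    simp only [mem_iInter, Finset.mem_range]
    exact ⟨fun h k => h (k + 1) k k.lt_succ_self, fun h _ k _ => h k⟩
  rw [← hω, ← hS_iInter]
  exact hcc.tendsto_vOn_iInter hS (fun n => isClosed_biInter fun k _ => hM_closed _) hlcω

/-- scenario approach. If the robust problem is feasible and `g n` is
eventually level-compact on `S n ω` for `P`-a.e. `ω`, then the scenario optimal values
converge to the robust optimal value: `v(g n, S n ω) → v(g, M_as)` a.s. -/
theorem scenario_value_convergence {X : Type*} [MetricSpace X] [PolishSpace X]
    {Ξ : Type*} [MeasurableSpace Ξ] (ℙ : Measure Ξ) [IsProbabilityMeasure ℙ] [ℙ.IsComplete]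
    (P : Measure (ℕ → Ξ)) [IsProbabilityMeasure P] (hP : IsProductMeasure P ℙ)
    (M : Ξ → Set X) (hM_closed : ∀ ξ, IsClosed (M ξ)) (hM_meas : MeasurableMultifun M)
    (g : X → EReal) (gn : ℕ → X → EReal)
    (hg_noBot : ∀ x, g x ≠ ⊥) (hgn_noBot : ∀ n x, gn n x ≠ ⊥)
    (hg_lsc : LowerSemicontinuous g) (hgn_lsc : ∀ n, LowerSemicontinuous (gn n))
    (hcc : ContConv gn g)
    (hfeas : ∃ x ∈ {y : X | ∀ᵐ ζ ∂ℙ, y ∈ M ζ}, g x < ⊤)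
    (hlc : ∀ᵐ ω ∂P, EvLevelCompact gn (fun n => ⋂ k ∈ Finset.range n, M (ω k))) :
    ∀ᵐ ω ∂P,
      Tendsto (fun n => vOn (gn n) (⋂ k ∈ Finset.range n, M (ω k))) atTop
        (𝓝 (vOn g {y : X | ∀ᵐ ζ ∂ℙ, y ∈ M ζ})) :=
  scenario_value_convergence_general ℙ P hP M hM_closed hM_meas g gn hcc hlc
end
end
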